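/- arXiv:2207.10751 — 2 statements merged into one kernel-verified Lean document; each statement's English description precedes it below -/
import Mathlib

section
/- Let $f(w) = \frac{1}{2}\|Bw - c\|^2$ where $B \in \mathbb{R}^{d \times K}$, $c \in \mathbb{R}^d$, restricted to a polyhedron $P \subseteq \mathbb{R}^K$, and suppose the minimum value over $P$ is attained. Then (Hoffman-type error bound / linear regularity for convex quadratics over polyhedra) there exist constants $C > 0$ such that for all $w \in P$: $\mathrm{dist}(w, \arg\min_P f) \leq C\,[f(w) - \min_P f]^{1/2}$. -/
/-
For `f w = ½‖Bw - c‖²`, first-order optimality of the minimizer `w₀` over the convex set `P` gives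
`f w - f w₀ ≥ ½‖B(w - w₀)‖²`. Hence the minimizers are the points of `P` with `Bw = Bw₀`, again a
polyhedron, and at `w ∈ P` all its constraint residuals are at most
`‖B(w - w₀)‖ ≤ √(2(f w - f w₀))`.

It remains to prove Hoffman's bound: the distance from `x` to `S = {x | ∀ i, ⟪aᵢ, x⟫ ≤ bᵢ}` is at
most `C r` whenever all residuals `⟪aᵢ, x⟫ - bᵢ` are at most `r ≥ 0`. If `y` is the nearest point
of `S`, then `x - y` lies in the normal cone of `S` at `y`, which by Farkas' lemma (finitely
generated cones are closed, being finite unions of simplicial cones) is generated by the `aᵢ` of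
the constraints active at `y`. By Carathéodory's theorem for cones, `x - y = ∑ μᵢ aᵢ` with `μ ≥ 0`
and `(aᵢ)` linearly independent, so `‖x - y‖² = ∑ μᵢ (⟪aᵢ, x⟫ - bᵢ) ≤ (∑ μᵢ) r`, while
`∑ μᵢ ≤ C ‖x - y‖` for a constant depending only on the finitely many independent subfamilies.
-/

open Finset Set Filter Topology
open scoped RealInnerProductSpace

namespace PointedCone

variable {𝕜 M ι : Type*} [Field 𝕜] [LinearOrder 𝕜] [IsStrictOrderedRing 𝕜]
  [AddCommGroup M] [Module 𝕜 M] {a : ι → M} {s : Finset ι} {x : M}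

theorem mem_hull_image_finset_iff :
    x ∈ hull 𝕜 (a '' s) ↔ ∃ μ : ι → 𝕜, (∀ i ∈ s, 0 ≤ μ i) ∧ ∑ i ∈ s, μ i • a i = x := by
  rw [Submodule.mem_span_image_finset_iff_exists_fun']
  constructor
  · rintro ⟨c, rfl⟩
    exact ⟨fun i ↦ c i, fun i _ ↦ (c i).2, rfl⟩
  · rintro ⟨μ, hμ, rfl⟩
    refine ⟨fun i ↦ ⟨max (μ i) 0, le_max_right _ _⟩, Finset.sum_congr rfl fun i hi ↦ ?_⟩
    simp [Nonneg.mk_smul, max_eq_left (hμ i hi)]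

theorem exists_mem_hull_image_erase_of_not_linearIndepOn [DecidableEq ι] (hx : x ∈ hull 𝕜 (a '' s))
    (hs : ¬LinearIndepOn 𝕜 a s) : ∃ j ∈ s, x ∈ hull 𝕜 (a '' (s.erase j)) := by
  obtain ⟨μ, hμ, rfl⟩ := mem_hull_image_finset_iff.1 hx
  obtain ⟨g, hg, hpos⟩ : ∃ g : ι → 𝕜, ∑ i ∈ s, g i • a i = 0 ∧ ∃ i ∈ s, 0 < g i := by
    obtain ⟨g, hg, i, hi, hgi⟩ := not_linearIndepOn_finset_iff.1 hs
    rcases hgi.lt_or_gt with hneg | hpos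
    · exact ⟨-g, by simp [neg_smul, hg], i, hi, by simpa⟩
    · exact ⟨g, hg, i, hi, hpos⟩
  obtain ⟨j, hj, hjmin⟩ := (s.filter (0 < g ·)).exists_min_image (fun i ↦ μ i / g i)
    (by simpa [Finset.filter_nonempty_iff] using hpos)
  rw [Finset.mem_filter] at hj
  -- subtracting `r • g` keeps the coefficients nonnegative and kills the `j`-th one
  set r := μ j / g j
  have hr : 0 ≤ r := div_nonneg (hμ j hj.1) hj.2.le
  refine ⟨j, hj.1, mem_hull_image_finset_iff.2 ⟨μ - r • g, fun i hi ↦ ?_, ?_⟩⟩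
  · have hi := Finset.mem_of_mem_erase hi
    rcases le_or_gt (g i) 0 with hgi | hgi
    · simp only [Pi.sub_apply, Pi.smul_apply, smul_eq_mul, sub_nonneg]
      exact (mul_nonpos_of_nonneg_of_nonpos hr hgi).trans (hμ i hi)
    · have := hjmin i (Finset.mem_filter.2 ⟨hi, hgi⟩)
      simp only [Pi.sub_apply, Pi.smul_apply, smul_eq_mul, sub_nonneg]
      rwa [le_div_iff₀ hgi] at this
  · rw [Finset.sum_erase _ (by simp [r, div_mul_cancel₀ _ hj.2.ne'])]
    simp [sub_smul, Finset.sum_sub_distrib, mul_smul, ← Finset.smul_sum, hg]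

theorem exists_linearIndepOn_of_mem_hull_image (hx : x ∈ hull 𝕜 (a '' s)) :
    ∃ t ⊆ s, LinearIndepOn 𝕜 a t ∧ x ∈ hull 𝕜 (a '' t) := by
  classical
  induction s using Finset.strongInduction with
  | H s ih =>
    by_cases hs : LinearIndepOn 𝕜 a s
    · exact ⟨s, subset_rfl, hs, hx⟩
    obtain ⟨j, hj, hxj⟩ := exists_mem_hull_image_erase_of_not_linearIndepOn hx hs
    obtain ⟨t, hts, ht, hxt⟩ := ih _ (Finset.erase_ssubset hj) hxj
    exact ⟨t, hts.trans (Finset.erase_subset _ _), ht, hxt⟩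

end PointedCone

section Normed

variable {E ι : Type*} [NormedAddCommGroup E] [NormedSpace ℝ E]

theorem PointedCone.isClosed_hull_range_of_linearIndependent [Fintype ι] {v : ι → E}
    (hv : LinearIndependent ℝ v) : IsClosed (PointedCone.hull ℝ (range v) : Set E) := by
  have hcone : (PointedCone.hull ℝ (range v) : Set E) = Fintype.linearCombination ℝ v '' Ici 0 := by
    ext x
    simp only [SetLike.mem_coe, Submodule.mem_span_range_iff_exists_fun, mem_image, Set.mem_Ici,
      Fintype.linearCombination_apply]
    constructor
    · rintro ⟨c, rfl⟩
      exact ⟨fun i ↦ c i, fun i ↦ (c i).2, rfl⟩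
    · rintro ⟨μ, hμ, rfl⟩
      exact ⟨fun i ↦ ⟨μ i, hμ i⟩, rfl⟩
  have hinj := linearIndependent_iff_injective_fintypeLinearCombination.1 hv
  rw [hcone]
  exact (LinearMap.isClosedEmbedding_of_injective (LinearMap.ker_eq_bot.2 hinj)).isClosedMap _
    isClosed_Ici

theorem PointedCone.isClosed_hull_image_finset (a : ι → E) (s : Finset ι) :
    IsClosed (PointedCone.hull ℝ (a '' s) : Set E) := by
  classical
  have hunion : (PointedCone.hull ℝ (a '' s) : Set E) =
      ⋃ t ∈ s.powerset.filter (fun t : Finset ι ↦ LinearIndepOn ℝ a (t : Set ι)),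
        PointedCone.hull ℝ (a '' t) := by
    ext x
    simp only [SetLike.mem_coe, mem_iUnion, Finset.mem_filter, Finset.mem_powerset, exists_prop]
    constructor
    · intro hx
      obtain ⟨t, hts, ht, hxt⟩ := PointedCone.exists_linearIndepOn_of_mem_hull_image hx
      exact ⟨t, ⟨hts, ht⟩, hxt⟩
    · rintro ⟨t, ⟨hts, -⟩, hxt⟩
      exact Submodule.span_mono (image_mono (Finset.coe_subset.2 hts)) hxt
  rw [hunion]
  refine isClosed_biUnion_finset fun t ht ↦ ?_
  rw [image_eq_range]
  exact PointedCone.isClosed_hull_range_of_linearIndependent (Finset.mem_filter.1 ht).2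

theorem LinearIndependent.exists_sum_abs_le_mul_norm [Fintype ι] {v : ι → E}
    (hv : LinearIndependent ℝ v) : ∃ C > 0, ∀ μ : ι → ℝ, ∑ i, |μ i| ≤ C * ‖∑ i, μ i • v i‖ := by
  have hinj := linearIndependent_iff_injective_fintypeLinearCombination.1 hv
  obtain ⟨K, hK, hanti⟩ :=
    (Fintype.linearCombination ℝ v).exists_antilipschitzWith (LinearMap.ker_eq_bot.2 hinj)
  refine ⟨(Fintype.card ι + 1) * K, by positivity, fun μ ↦ ?_⟩
  have hμ : ‖μ‖ ≤ K * ‖∑ i, μ i • v i‖ := by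
    simpa [Fintype.linearCombination_apply] using hanti.le_mul_dist μ 0
  calc ∑ i, |μ i| ≤ ∑ _i : ι, ‖μ‖ := Finset.sum_le_sum fun i _ ↦ norm_le_pi_norm μ i
    _ = Fintype.card ι * ‖μ‖ := by simp
    _ ≤ (Fintype.card ι + 1) * (K * ‖∑ i, μ i • v i‖) := by gcongr; linarith
    _ = _ := by ring

theorem exists_forall_linearIndepOn_sum_abs_le_mul_norm [Finite ι] (a : ι → E) :
    ∃ C > 0, ∀ t : Finset ι, LinearIndepOn ℝ a t →
      ∀ μ : ι → ℝ, ∑ i ∈ t, |μ i| ≤ C * ‖∑ i ∈ t, μ i • a i‖ := by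
  have hbound (t : Finset ι) : ∃ C > 0, LinearIndepOn ℝ a t →
      ∀ μ : ι → ℝ, ∑ i ∈ t, |μ i| ≤ C * ‖∑ i ∈ t, μ i • a i‖ := by
    by_cases ht : LinearIndepOn ℝ a t
    · obtain ⟨C, hC, hCt⟩ := LinearIndependent.exists_sum_abs_le_mul_norm (v := fun i : t ↦ a i) ht
      refine ⟨C, hC, fun _ μ ↦ ?_⟩
      rw [← Finset.sum_coe_sort t, ← Finset.sum_coe_sort t]
      exact hCt (fun i ↦ μ i)
    · exact ⟨1, one_pos, fun h ↦ absurd h ht⟩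
  choose C hC hCt using hbound
  obtain ⟨t₀, ht₀⟩ := Finite.exists_max C
  exact ⟨C t₀, hC t₀, fun t ht μ ↦ (hCt t ht μ).trans (by gcongr; exact ht₀ t)⟩

end Normed

section InnerProductSpace

variable {E ι : Type*} [NormedAddCommGroup E] [InnerProductSpace ℝ E]

theorem PointedCone.mem_hull_image_finset_of_forall_inner_nonpos [CompleteSpace E]
    {a : ι → E} {s : Finset ι} {z : E}
    (hz : ∀ u, (∀ i ∈ s, ⟪a i, u⟫ ≤ 0) → ⟪z, u⟫ ≤ 0) : z ∈ PointedCone.hull ℝ (a '' s) := by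
  by_contra hzC
  let C : ProperCone ℝ E :=
    ⟨PointedCone.hull ℝ (a '' s), PointedCone.isClosed_hull_image_finset a s⟩
  obtain ⟨y, hy, hzy⟩ := C.hyperplane_separation' hzC
  have hay (i : ι) (hi : i ∈ s) : ⟪a i, -y⟫ ≤ 0 := by
    simpa [inner_neg_right] using hy (a i) (PointedCone.subset_hull (mem_image_of_mem a hi))
  have := hz (-y) hay
  rw [inner_neg_right] at this
  linarith

def polyhedron (a : ι → E) (b : ι → ℝ) : Set E := {x | ∀ i, ⟪a i, x⟫ ≤ b i}

variable {a : ι → E} {b : ι → ℝ}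

theorem isClosed_polyhedron : IsClosed (polyhedron a b) := by
  simp only [polyhedron, ofPred_forall]
  exact isClosed_iInter fun i ↦ isClosed_le (continuous_const.inner continuous_id) continuous_const

theorem convex_polyhedron : Convex ℝ (polyhedron a b) := by
  simp only [polyhedron, ofPred_forall]
  exact convex_iInter fun i ↦ convex_halfSpace_le (innerₛₗ ℝ (a i)).isLinear (b i)

theorem exists_pos_add_smul_mem_polyhedron [Finite ι] {y u : E} (hy : y ∈ polyhedron a b)
    (hu : ∀ i, ⟪a i, y⟫ = b i → ⟪a i, u⟫ ≤ 0) : ∃ ε > (0 : ℝ), y + ε • u ∈ polyhedron a b := by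
  have hev : ∀ᶠ ε in 𝓝[>] (0 : ℝ), y + ε • u ∈ polyhedron a b := by
    simp only [polyhedron, mem_ofPred_eq, eventually_all]
    intro i
    rcases (hy i).eq_or_lt with hact | hinact
    · filter_upwards [self_mem_nhdsWithin] with ε (hε : 0 < ε)
      rw [inner_add_right, real_inner_smul_right, hact]
      nlinarith [hu i hact]
    · have hcont : Continuous fun ε : ℝ ↦ ⟪a i, y + ε • u⟫ := by fun_prop
      have := hcont.continuousAt.eventually_lt (x₀ := 0) continuousAt_const
        (by simpa using hinact : ⟪a i, y + (0 : ℝ) • u⟫ < b i)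
      exact (eventually_nhdsWithin_of_eventually_nhds this).mono fun ε hε ↦ hε.le
  obtain ⟨ε, hmem, hε⟩ := (hev.and self_mem_nhdsWithin).exists
  exact ⟨ε, hε, hmem⟩

theorem exists_active_mem_hull_of_forall_inner_sub_nonpos [Finite ι] [CompleteSpace E] {y z : E}
    (hy : y ∈ polyhedron a b) (hz : ∀ w ∈ polyhedron a b, ⟪z, w - y⟫ ≤ 0) :
    ∃ J : Finset ι, (∀ i ∈ J, ⟪a i, y⟫ = b i) ∧ z ∈ PointedCone.hull ℝ (a '' J) := by
  classical
  have := Fintype.ofFinite ι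
  refine ⟨univ.filter fun i ↦ ⟪a i, y⟫ = b i, by simp, ?_⟩
  refine PointedCone.mem_hull_image_finset_of_forall_inner_nonpos fun u hu ↦ ?_
  obtain ⟨ε, hε, hmem⟩ := exists_pos_add_smul_mem_polyhedron hy fun i hi ↦ hu i (by simpa using hi)
  have := hz _ hmem
  rw [add_sub_cancel_left, real_inner_smul_right] at this
  exact nonpos_of_mul_nonpos_right this hε

theorem exists_infDist_polyhedron_le [Finite ι] [CompleteSpace E] (a : ι → E) (b : ι → ℝ) :
    ∃ C > 0, ∀ x r, 0 ≤ r → (∀ i, ⟪a i, x⟫ - b i ≤ r) →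
      Metric.infDist x (polyhedron a b) ≤ C * r := by
  obtain ⟨C, hC, hcoef⟩ := exists_forall_linearIndepOn_sum_abs_le_mul_norm a
  refine ⟨C, hC, fun x r hr hres ↦ ?_⟩
  rcases (polyhedron a b).eq_empty_or_nonempty with hempty | hne
  · rw [hempty, Metric.infDist_empty]
    positivity
  obtain ⟨y, hy, hproj⟩ := exists_norm_eq_iInf_of_complete_convex hne
    isClosed_polyhedron.isComplete convex_polyhedron x
  rw [norm_eq_iInf_iff_real_inner_le_zero convex_polyhedron hy] at hproj
  obtain ⟨J, hJ, hxyJ⟩ := exists_active_mem_hull_of_forall_inner_sub_nonpos hy hproj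
  obtain ⟨t, htJ, ht, hxyt⟩ := PointedCone.exists_linearIndepOn_of_mem_hull_image hxyJ
  obtain ⟨μ, hμ, hsum⟩ := PointedCone.mem_hull_image_finset_iff.1 hxyt
  have hsq : ‖x - y‖ ^ 2 ≤ C * ‖x - y‖ * r := calc
    ‖x - y‖ ^ 2 = ∑ i ∈ t, μ i * ⟪a i, x - y⟫ := by
      rw [← real_inner_self_eq_norm_sq]
      nth_rw 1 [← hsum]
      simp only [sum_inner, real_inner_smul_left]
    _ ≤ ∑ i ∈ t, μ i * r := Finset.sum_le_sum fun i hi ↦ by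
      gcongr
      · exact hμ i hi
      · rw [inner_sub_right, hJ i (htJ hi)]
        exact hres i
    _ = (∑ i ∈ t, μ i) * r := (Finset.sum_mul ..).symm
    _ ≤ C * ‖x - y‖ * r := by
      gcongr
      calc ∑ i ∈ t, μ i ≤ ∑ i ∈ t, |μ i| := Finset.sum_le_sum fun i _ ↦ le_abs_self _
        _ ≤ C * ‖x - y‖ := hsum ▸ hcoef t ht μ
  calc Metric.infDist x (polyhedron a b) ≤ ‖x - y‖ := by
        simpa [dist_eq_norm] using Metric.infDist_le_dist_of_mem hy
    _ ≤ C * r := by nlinarith [norm_nonneg (x - y), mul_nonneg hC.le hr]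

theorem exists_infDist_polyhedron_inter_le [Finite ι] [CompleteSpace E] {κ : Type*} [Finite κ]
    (a : ι → E) (b : ι → ℝ) (a' : κ → E) (b' : κ → ℝ) :
    ∃ C > 0, ∀ x r, 0 ≤ r → (∀ i, ⟪a i, x⟫ - b i ≤ r) → (∀ j, |⟪a' j, x⟫ - b' j| ≤ r) →
      Metric.infDist x (polyhedron a b ∩ {x | ∀ j, ⟪a' j, x⟫ = b' j}) ≤ C * r := by
  have hset : polyhedron a b ∩ {x | ∀ j, ⟪a' j, x⟫ = b' j} =
      polyhedron (Sum.elim a (Sum.elim a' (-a'))) (Sum.elim b (Sum.elim b' (-b'))) := by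
    ext x
    simp [polyhedron, Sum.forall, inner_neg_left, le_antisymm_iff, forall_and]
  obtain ⟨C, hC, hbound⟩ := exists_infDist_polyhedron_le (Sum.elim a (Sum.elim a' (-a')))
    (Sum.elim b (Sum.elim b' (-b')))
  refine ⟨C, hC, fun x r hr hres hres' ↦ hset ▸ hbound x r hr ?_⟩
  simp only [Sum.forall, Sum.elim_inl, Sum.elim_inr, Pi.neg_apply, inner_neg_left]
  exact ⟨hres, fun j ↦ (abs_le.1 (hres' j)).2, fun j ↦ by linarith [(abs_le.1 (hres' j)).1]⟩

theorem exists_infDist_polyhedron_inter_preimage_le [Finite ι] [CompleteSpace E] {κ : Type*}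
    [Fintype κ] (a : ι → E) (b : ι → ℝ) (L : E →L[ℝ] EuclideanSpace ℝ κ)
    (y : EuclideanSpace ℝ κ) :
    ∃ C > 0, ∀ x r, 0 ≤ r → (∀ i, ⟪a i, x⟫ - b i ≤ r) → ‖L x - y‖ ≤ r →
      Metric.infDist x (polyhedron a b ∩ L ⁻¹' {y}) ≤ C * r := by
  let row (j : κ) : E := (InnerProductSpace.toDual ℝ E).symm ((EuclideanSpace.proj j).comp L)
  have hrow (j : κ) (x : E) : ⟪row j, x⟫ = L x j := by
    simp [row, InnerProductSpace.toDual_symm_apply]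
  have hset : polyhedron a b ∩ L ⁻¹' {y} = polyhedron a b ∩ {x | ∀ j, ⟪row j, x⟫ = y j} := by
    ext x
    simp [hrow, WithLp.ext_iff, funext_iff]
  obtain ⟨C, hC, hbound⟩ := exists_infDist_polyhedron_inter_le a b row y
  refine ⟨C, hC, fun x r hr hres hres' ↦ hset ▸ hbound x r hr hres fun j ↦ ?_⟩
  rw [hrow, ← PiLp.sub_apply, ← Real.norm_eq_abs]
  exact (PiLp.norm_apply_le _ j).trans hres'

end InnerProductSpace

section LeastSquares

variable {E F : Type*} [AddCommGroup E] [Module ℝ E] [NormedAddCommGroup F] [InnerProductSpace ℝ F]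

theorem inner_nonneg_of_forall_norm_sq_le_norm_add_smul_sq {e d : F}
    (h : ∀ t ∈ Ioc (0 : ℝ) 1, ‖e‖ ^ 2 ≤ ‖e + t • d‖ ^ 2) : 0 ≤ ⟪e, d⟫ := by
  have hslope : ∀ t ∈ Ioc (0 : ℝ) 1, 0 ≤ 2 * ⟪e, d⟫ + t * ‖d‖ ^ 2 := fun t ht ↦ by
    have := h t ht
    rw [norm_add_sq_real, norm_smul, real_inner_smul_right, Real.norm_of_nonneg ht.1.le] at this
    nlinarith [ht.1]
  have hlim : Tendsto (fun t : ℝ ↦ 2 * ⟪e, d⟫ + t * ‖d‖ ^ 2) (𝓝[>] 0) (𝓝 (2 * ⟪e, d⟫)) := by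
    have : Continuous fun t : ℝ ↦ 2 * ⟪e, d⟫ + t * ‖d‖ ^ 2 := by fun_prop
    simpa using (this.tendsto 0).mono_left nhdsWithin_le_nhds
  have := ge_of_tendsto hlim (eventually_of_mem (Ioc_mem_nhdsGT one_pos) hslope)
  linarith

variable (L : E →ₗ[ℝ] F) (c : F) {P : Set E} {w₀ : E}

theorem half_norm_sub_sq_le_of_isMinOn (hP : Convex ℝ P) (hw₀ : w₀ ∈ P)
    (hmin : IsMinOn (fun w ↦ ‖L w - c‖ ^ 2 / 2) P w₀) {w : E} (hw : w ∈ P) :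
    ‖L w - L w₀‖ ^ 2 / 2 ≤ ‖L w - c‖ ^ 2 / 2 - ‖L w₀ - c‖ ^ 2 / 2 := by
  have hsegment (t : ℝ) : L (w₀ + t • (w - w₀)) - c = (L w₀ - c) + t • (L w - L w₀) := by
    rw [map_add, map_smul, map_sub]
    abel
  have hfirst : 0 ≤ ⟪L w₀ - c, L w - L w₀⟫ :=
    inner_nonneg_of_forall_norm_sq_le_norm_add_smul_sq fun t ht ↦ by
      have := isMinOn_iff.1 hmin _ (hP.add_smul_sub_mem hw₀ hw (Ioc_subset_Icc_self ht))
      rw [hsegment] at this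
      linarith
  have hw' : L w - c = (L w₀ - c) + (L w - L w₀) := by abel
  rw [hw', norm_add_sq_real]
  linarith

theorem sep_isMinOn_half_norm_sub_sq_eq_inter_preimage (hP : Convex ℝ P) (hw₀ : w₀ ∈ P)
    (hmin : IsMinOn (fun w ↦ ‖L w - c‖ ^ 2 / 2) P w₀) :
    {s ∈ P | IsMinOn (fun w ↦ ‖L w - c‖ ^ 2 / 2) P s} = P ∩ L ⁻¹' {L w₀} := by
  ext s
  simp only [mem_sep_iff, mem_inter_iff, Set.mem_preimage, mem_singleton_iff]
  refine and_congr_right fun hs ↦ ⟨fun hsmin ↦ ?_, fun hLs ↦ ?_⟩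
  · have hsq := half_norm_sub_sq_le_of_isMinOn L c hP hw₀ hmin hs
    rw [le_antisymm (isMinOn_iff.1 hsmin w₀ hw₀) (isMinOn_iff.1 hmin s hs), sub_self] at hsq
    have : ‖L s - L w₀‖ ^ 2 ≤ 0 := by linarith
    exact sub_eq_zero.1 (by simpa using this)
  · exact isMinOn_iff.2 fun w hw ↦ by simpa only [hLs] using isMinOn_iff.1 hmin w hw

end LeastSquares

theorem exists_infDist_sep_isMinOn_half_norm_sub_sq_le {E ι κ : Type*} [NormedAddCommGroup E]
    [InnerProductSpace ℝ E] [CompleteSpace E] [Finite ι] [Fintype κ] (a : ι → E) (b : ι → ℝ)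
    (L : E →L[ℝ] EuclideanSpace ℝ κ) (c : EuclideanSpace ℝ κ) {w₀ : E}
    (hw₀ : w₀ ∈ polyhedron a b)
    (hmin : IsMinOn (fun w ↦ ‖L w - c‖ ^ 2 / 2) (polyhedron a b) w₀) :
    ∃ C > 0, ∀ w ∈ polyhedron a b,
      Metric.infDist w
          {s ∈ polyhedron a b | IsMinOn (fun w ↦ ‖L w - c‖ ^ 2 / 2) (polyhedron a b) s}
        ≤ C * (‖L w - c‖ ^ 2 / 2 - ‖L w₀ - c‖ ^ 2 / 2) ^ ((1 : ℝ) / 2) := by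
  have hargmin := sep_isMinOn_half_norm_sub_sq_eq_inter_preimage L.toLinearMap c
    convex_polyhedron hw₀ hmin
  simp only [ContinuousLinearMap.coe_coe] at hargmin
  obtain ⟨C, hC, hbound⟩ := exists_infDist_polyhedron_inter_preimage_le a b L (L w₀)
  refine ⟨C * √2, by positivity, fun w hw ↦ ?_⟩
  have hgrowth := half_norm_sub_sq_le_of_isMinOn L.toLinearMap c convex_polyhedron hw₀ hmin hw
  simp only [ContinuousLinearMap.coe_coe] at hgrowth
  rw [hargmin, mul_assoc, ← Real.sqrt_eq_rpow, ← Real.sqrt_mul zero_le_two]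
  calc _ ≤ C * ‖L w - L w₀‖ :=
        hbound w _ (norm_nonneg _) (fun i ↦ by linarith [hw i, norm_nonneg (L w - L w₀)]) le_rfl
    _ ≤ _ := by
        gcongr
        exact Real.le_sqrt_of_sq_le (by linarith)

theorem Matrix.inner_toLp_row {m n : Type*} [Fintype n] (A : Matrix m n ℝ) (i : m)
    (w : EuclideanSpace ℝ n) : ⟪WithLp.toLp 2 (A i), w⟫ = ∑ k, A i k * w k := by
  simp [PiLp.inner_apply, mul_comm]

/-- Hoffman-type error bound: a convex quadratic `f(w) = ½‖Bw - c‖²` over a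
polyhedron `P`, with attained minimum, satisfies
`dist(w, argmin_P f) ≤ C (f(w) - min_P f)^{1/2}` for some `C > 0`. -/
theorem stmt_15 {d K m : ℕ} (B : Matrix (Fin d) (Fin K) ℝ) (c : Fin d → ℝ)
    (M : Matrix (Fin m) (Fin K) ℝ) (v : Fin m → ℝ)
    (P : Set (EuclideanSpace ℝ (Fin K)))
    (hP : P = {w | ∀ i, ∑ k, M i k * w k ≤ v i})
    (f : EuclideanSpace ℝ (Fin K) → ℝ)
    (hf : ∀ w, f w = (1 / 2) * ∑ i, ((∑ k, B i k * w k) - c i) ^ 2)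
    (wmin : EuclideanSpace ℝ (Fin K)) (hwmin : wmin ∈ P)
    (hmin : ∀ w ∈ P, f wmin ≤ f w) :
    ∃ C > 0, ∀ w ∈ P,
      Metric.infDist w {s ∈ P | ∀ w' ∈ P, f s ≤ f w'}
        ≤ C * (f w - f wmin) ^ ((1 : ℝ) / 2) := by
  set L := LinearMap.toContinuousLinearMap (Matrix.toLpLin 2 2 B)
  set a := fun i ↦ WithLp.toLp 2 (M i)
  have hL (w i) : L w i = ∑ k, B i k * w k := rfl
  have hfL : f = fun w ↦ ‖L w - WithLp.toLp 2 c‖ ^ 2 / 2 := funext fun w ↦ by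
    simp only [hf, hL, EuclideanSpace.real_norm_sq_eq, PiLp.sub_apply]
    ring
  have hPa : P = polyhedron a v := by
    simp [hP, a, polyhedron, Matrix.inner_toLp_row]
  subst hfL hPa
  exact exists_infDist_sep_isMinOn_half_norm_sub_sq_le a v L _ hwmin hmin
end

section
/- Consider the iterates of accelerated proximal gradient with inexact gradients as in Algorithm 2: given $E_s \geq 0$ with $\mathbb{E}[E_s^2] \leq (s+2)^{-4}$, step size $\eta > 0$, and the recursion $\frac{(s+1)(s+2)}{2}\delta_{s+1} \leq \frac{s(s+1)}{2}\delta_s + \frac{8}{\eta}(d_s - d_{s+1}) + 2(s+1)E_s + \frac{\eta(s+1)(s+2)}{4}E_s^2$, where $\delta_s, d_s \geq 0$ and $d_0 \leq 2$. Then $\mathbb{E}[\delta_S] \leq \frac{32}{\eta S(S+1)} + \frac{4\log(S) + 4}{S(S+1)} + \frac{\pi^2 \eta}{12\, S(S+1)}$ for all $S \geq 1$. -/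
open MeasureTheory
open scoped ProbabilityTheory

open Finset Real

/-! With `Φ_s = s(s+1)/2 · δ_s + 8/η · d_s` the recursion reads `Φ_{s+1} ≤ Φ_s + (error)`.
AM–GM removes the term linear in `E_s`, so the error depends on `E_s` only through `E_s²`, and
the recursion can be telescoped for each outcome and integrated once at the end. The resulting
error sums are controlled by the harmonic bound `∑_{s<S} (s+1)/(s+2)² ≤ 1 + log S` and by
`∑ (s+1)(s+2)/(s+2)⁴ ≤ ζ(2) = π²/6`. -/

theorem le_add_sum_range_of_succ_le_add {G : Type*} [AddCommGroup G] [PartialOrder G]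
    [IsOrderedAddMonoid G] {f r : ℕ → G} (h : ∀ s, f (s + 1) ≤ f s + r s) (n : ℕ) :
    f n ≤ f 0 + ∑ s ∈ range n, r s := by
  have hsum := sum_le_sum fun s (_ : s ∈ range n) => sub_le_iff_le_add'.mpr (h s)
  rw [sum_range_sub] at hsum
  exact sub_le_iff_le_add'.mp hsum

theorem sum_range_succ_div_add_two_sq_le_log_add_one (n : ℕ) :
    ∑ s ∈ range n, ((s : ℝ) + 1) / ((s : ℝ) + 2) ^ 2 ≤ log n + 1 := by
  calc ∑ s ∈ range n, ((s : ℝ) + 1) / ((s : ℝ) + 2) ^ 2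
      ≤ ∑ s ∈ range n, ((s : ℝ) + 1)⁻¹ := by
        gcongr with s
        rw [div_le_iff₀ (by positivity), inv_mul_eq_div, le_div_iff₀ (by positivity)]
        nlinarith
    _ = harmonic n := by simp [harmonic]
    _ ≤ log n + 1 := by linarith [harmonic_le_one_add_log n]

theorem sum_range_succ_mul_add_two_div_pow_four_le_pi_sq_div_six (n : ℕ) :
    ∑ s ∈ range n, ((s : ℝ) + 1) * ((s : ℝ) + 2) / ((s : ℝ) + 2) ^ 4 ≤ π ^ 2 / 6 := by
  have hzeta : HasSum (fun s : ℕ => (((s : ℝ) + 2) ^ 2)⁻¹) (π ^ 2 / 6 - 1) := by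
    have h := (hasSum_nat_add_iff' 2).mpr hasSum_zeta_two
    norm_num [sum_range_succ] at h
    exact h
  calc ∑ s ∈ range n, ((s : ℝ) + 1) * ((s : ℝ) + 2) / ((s : ℝ) + 2) ^ 4
      ≤ ∑ s ∈ range n, (((s : ℝ) + 2) ^ 2)⁻¹ := by
        gcongr with s
        rw [div_le_iff₀ (by positivity), inv_mul_eq_div, le_div_iff₀ (by positivity)]
        nlinarith
    _ ≤ π ^ 2 / 6 - 1 := sum_le_hasSum _ (fun _ _ => by positivity) hzeta
    _ ≤ π ^ 2 / 6 := by linarith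

/-- The step-`s` error of the recursion in terms of `x = E_s²`, once the linear term is removed
by AM–GM: `2 E ≤ (s + 2)² E² + (s + 2)⁻²`. -/
noncomputable def errorTerm (η : ℝ) (s : ℕ) (x : ℝ) : ℝ :=
  ((s : ℝ) + 1) / ((s : ℝ) + 2) ^ 2
    + (((s : ℝ) + 1) * ((s : ℝ) + 2) ^ 2 + η * ((s : ℝ) + 1) * ((s : ℝ) + 2) / 4) * x

theorem add_le_errorTerm (η : ℝ) (s : ℕ) (e : ℝ) :
    2 * ((s : ℝ) + 1) * e + η * ((s : ℝ) + 1) * ((s : ℝ) + 2) / 4 * e ^ 2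
      ≤ errorTerm η s (e ^ 2) := by
  have hsq : 0 ≤ ((s : ℝ) + 1) * (((s : ℝ) + 2) * e - 1 / ((s : ℝ) + 2)) ^ 2 := by positivity
  have hexpand : ((s : ℝ) + 1) * (((s : ℝ) + 2) * e - 1 / ((s : ℝ) + 2)) ^ 2 =
      ((s : ℝ) + 1) / ((s : ℝ) + 2) ^ 2 + ((s : ℝ) + 1) * ((s : ℝ) + 2) ^ 2 * e ^ 2
        - 2 * ((s : ℝ) + 1) * e := by
    field_simp
    ring
  rw [errorTerm]
  linarith

theorem weighted_gap_le_add_sum_errorTerm {η : ℝ} (hη : 0 < η) {δ d e : ℕ → ℝ}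
    (hd0 : ∀ s, 0 ≤ d s) (hd2 : d 0 ≤ 2)
    (hrec : ∀ s : ℕ, ((s : ℝ) + 1) * ((s : ℝ) + 2) / 2 * δ (s + 1) ≤
        (s : ℝ) * ((s : ℝ) + 1) / 2 * δ s + 8 / η * (d s - d (s + 1))
        + 2 * ((s : ℝ) + 1) * e s + η * ((s : ℝ) + 1) * ((s : ℝ) + 2) / 4 * e s ^ 2)
    (n : ℕ) :
    (n : ℝ) * (n + 1) / 2 * δ n ≤ 16 / η + ∑ s ∈ range n, errorTerm η s (e s ^ 2) := by
  have htel := le_add_sum_range_of_succ_le_add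
    (f := fun s : ℕ => (s : ℝ) * (s + 1) / 2 * δ s + 8 / η * d s)
    (r := fun s => errorTerm η s (e s ^ 2))
    (fun s => by push_cast; linarith [hrec s, add_le_errorTerm η s (e s)]) n
  have hη8 : 0 ≤ 8 / η := by positivity
  have hd0_le : 8 / η * d 0 ≤ 16 / η := by
    calc 8 / η * d 0 ≤ 8 / η * 2 := mul_le_mul_of_nonneg_left hd2 hη8
      _ = 16 / η := by ring
  simp only [CharP.cast_eq_zero, zero_mul, zero_div, zero_add] at htel
  linarith [mul_nonneg hη8 (hd0 n)]

theorem sum_range_errorTerm_le {η : ℝ} (hη : 0 ≤ η) {b : ℕ → ℝ}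
    (hb : ∀ s : ℕ, b s ≤ 1 / ((s : ℝ) + 2) ^ 4) (n : ℕ) :
    ∑ s ∈ range n, errorTerm η s (b s) ≤ 2 * (log n + 1) + η / 4 * (π ^ 2 / 6) := by
  calc ∑ s ∈ range n, errorTerm η s (b s)
      ≤ ∑ s ∈ range n, (2 * (((s : ℝ) + 1) / ((s : ℝ) + 2) ^ 2)
          + η / 4 * (((s : ℝ) + 1) * ((s : ℝ) + 2) / ((s : ℝ) + 2) ^ 4)) := by
        refine sum_le_sum fun s _ => ?_
        calc errorTerm η s (b s) ≤ errorTerm η s (1 / ((s : ℝ) + 2) ^ 4) := by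
              unfold errorTerm
              gcongr
              exact hb s
          _ = _ := by unfold errorTerm; field_simp; ring
    _ = 2 * ∑ s ∈ range n, ((s : ℝ) + 1) / ((s : ℝ) + 2) ^ 2
          + η / 4 * ∑ s ∈ range n, ((s : ℝ) + 1) * ((s : ℝ) + 2) / ((s : ℝ) + 2) ^ 4 := by
        rw [sum_add_distrib, mul_sum, mul_sum]
    _ ≤ _ := by
        gcongr
        · exact sum_range_succ_div_add_two_sq_le_log_add_one n
        · exact sum_range_succ_mul_add_two_div_pow_four_le_pi_sq_div_six n

theorem integral_errorTerm {Ω : Type*} [MeasurableSpace Ω] (μ : Measure Ω) [IsProbabilityMeasure μ]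
    (η : ℝ) (s : ℕ) {X : Ω → ℝ} (hX : Integrable X μ) :
    ∫ ω, errorTerm η s (X ω) ∂μ = errorTerm η s (∫ ω, X ω ∂μ) := by
  simp only [errorTerm]
  rw [integral_add (integrable_const _) (hX.const_mul _), integral_const, integral_const_mul,
    probReal_univ, one_smul]

theorem stmt_18_general {Ω : Type*} [MeasureSpace Ω] [IsProbabilityMeasure (ℙ : Measure Ω)]
    (η : ℝ) (hη : 0 < η) (δ d E : ℕ → Ω → ℝ)
    (hδ0 : ∀ s ω, 0 ≤ δ s ω) (hd0 : ∀ s ω, 0 ≤ d s ω)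
    (hd2 : ∀ ω, d 0 ω ≤ 2)
    (hE2i : ∀ s, Integrable (fun ω => (E s ω) ^ 2) ℙ)
    (hE2 : ∀ s : ℕ, (∫ ω, (E s ω) ^ 2 ∂ℙ) ≤ 1 / ((s : ℝ) + 2) ^ 4)
    (hrec : ∀ (s : ℕ) (ω : Ω),
      ((s : ℝ) + 1) * ((s : ℝ) + 2) / 2 * δ (s + 1) ω ≤
        (s : ℝ) * ((s : ℝ) + 1) / 2 * δ s ω
        + 8 / η * (d s ω - d (s + 1) ω)
        + 2 * ((s : ℝ) + 1) * E s ω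
        + η * ((s : ℝ) + 1) * ((s : ℝ) + 2) / 4 * (E s ω) ^ 2)
    (S : ℕ) (hS : 1 ≤ S) :
    (∫ ω : Ω, δ S ω ∂ℙ) ≤
      32 / (η * S * (S + 1)) + (4 * Real.log S + 4) / (S * (S + 1))
        + Real.pi ^ 2 * η / (12 * S * (S + 1)) := by
  have hpointwise : ∀ ω, (S : ℝ) * (S + 1) / 2 * δ S ω
      ≤ 16 / η + ∑ s ∈ range S, errorTerm η s (E s ω ^ 2) := fun ω =>
    weighted_gap_le_add_sum_errorTerm (δ := (δ · ω)) (e := (E · ω)) hη (hd0 · ω) (hd2 ω)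
      (hrec · ω) S
  have hterm : ∀ s, Integrable (fun ω => errorTerm η s (E s ω ^ 2)) ℙ := fun s =>
    (integrable_const _).add ((hE2i s).const_mul _)
  have hexpected : (S : ℝ) * (S + 1) / 2 * ∫ ω, δ S ω ∂ℙ
      ≤ 16 / η + 2 * (log S + 1) + η / 4 * (π ^ 2 / 6) := by
    rw [← integral_const_mul]
    calc _ ≤ ∫ ω, (16 / η + ∑ s ∈ range S, errorTerm η s (E s ω ^ 2)) ∂ℙ :=
          integral_mono_of_nonneg (ae_of_all _ fun ω => mul_nonneg (by positivity) (hδ0 S ω))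
            ((integrable_const _).add (integrable_finsetSum _ fun s _ => hterm s))
            (ae_of_all _ hpointwise)
      _ = 16 / η + ∑ s ∈ range S, errorTerm η s (∫ ω, E s ω ^ 2 ∂ℙ) := by
          rw [integral_add (integrable_const _) (integrable_finsetSum _ fun s _ => hterm s),
            integral_finsetSum _ fun s _ => hterm s]
          simp only [integral_const, probReal_univ, one_smul, integral_errorTerm _ _ _ (hE2i _)]
      _ ≤ _ := by linarith [sum_range_errorTerm_le hη.le hE2 S]
  have hSpos : (0 : ℝ) < S * (S + 1) := by positivity
  calc ∫ ω, δ S ω ∂ℙ = (S : ℝ) * (S + 1) / 2 * (∫ ω, δ S ω ∂ℙ) * (2 / (S * (S + 1))) := by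
        field_simp
    _ ≤ (16 / η + 2 * (log S + 1) + η / 4 * (π ^ 2 / 6)) * (2 / (S * (S + 1))) := by
        gcongr
    _ = _ := by field_simp; ring

/-- Telescoping recursion of the inexact accelerated method: with gradient
errors satisfying `𝔼[E_s²] ≤ (s+2)⁻⁴`, `d₀ ≤ 2`, and the per-step recursion,
the expected optimality gap obeys
`𝔼[δ_S] ≤ 32/(ηS(S+1)) + (4 log S + 4)/(S(S+1)) + π²η/(12 S(S+1))`. -/
theorem stmt_18 {Ω : Type*} [MeasureSpace Ω] [IsProbabilityMeasure (ℙ : Measure Ω)]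
    (η : ℝ) (hη : 0 < η) (δ d E : ℕ → Ω → ℝ)
    (hδ0 : ∀ s ω, 0 ≤ δ s ω) (hd0 : ∀ s ω, 0 ≤ d s ω) (hE0 : ∀ s ω, 0 ≤ E s ω)
    (hd2 : ∀ ω, d 0 ω ≤ 2)
    (hEi : ∀ s, Integrable (E s) ℙ)
    (hE2i : ∀ s, Integrable (fun ω => (E s ω) ^ 2) ℙ)
    (hδi : ∀ s, Integrable (δ s) ℙ) (hdi : ∀ s, Integrable (d s) ℙ)
    (hE2 : ∀ s : ℕ, (∫ ω, (E s ω) ^ 2 ∂ℙ) ≤ 1 / ((s : ℝ) + 2) ^ 4)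
    (hrec : ∀ (s : ℕ) (ω : Ω),
      ((s : ℝ) + 1) * ((s : ℝ) + 2) / 2 * δ (s + 1) ω ≤
        (s : ℝ) * ((s : ℝ) + 1) / 2 * δ s ω
        + 8 / η * (d s ω - d (s + 1) ω)
        + 2 * ((s : ℝ) + 1) * E s ω
        + η * ((s : ℝ) + 1) * ((s : ℝ) + 2) / 4 * (E s ω) ^ 2)
    (S : ℕ) (hS : 1 ≤ S) :
    (∫ ω : Ω, δ S ω ∂ℙ) ≤
      32 / (η * S * (S + 1)) + (4 * Real.log S + 4) / (S * (S + 1))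
        + Real.pi ^ 2 * η / (12 * S * (S + 1)) :=
  stmt_18_general η hη δ d E hδ0 hd0 hd2 hE2i hE2 hrec S hS
end
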